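/- For any real number g > 0, any positive integer K ≥ 1, and any s_1,...,s_K ∈ [0,1] with ∑_{k=1}^K s_k = d^2, one has (1/(1+g))^{K} ≤ ∏_{k=1}^K 1/(1 + g·s_k) ≤ (1/(1+g))^{⌊d^2⌋}, i.e., the product subject to the sum constraint is maximized when as many s_k as possible equal 0 or 1. -/
import Mathlib


/-- Under the constraint `∑ s k = d²` with `s k ∈ [0,1]`, the product `∏ 1/(1+g s k)`
is at least `(1/(1+g))^K` and at most `(1/(1+g))^⌊d²⌋`. -/
theorem prod_inv_one_add_bounds
    (g : ℝ) (hg : 0 < g) (K : ℕ) (hK : 1 ≤ K)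
    (s : Fin K → ℝ) (hs : ∀ k, s k ∈ Set.Icc (0 : ℝ) 1)
    (d2 : ℝ) (hsum : ∑ k, s k = d2) :
    (1 / (1 + g)) ^ K ≤ ∏ k, 1 / (1 + g * s k) ∧
      ∏ k, 1 / (1 + g * s k) ≤ (1 / (1 + g)) ^ (⌊d2⌋.toNat) := by
  have hg1 : (0:ℝ) < 1 + g := by linarith
  have hpos : ∀ k : Fin K, (0:ℝ) < 1 + g * s k := fun k => by
    have := (hs k).1; nlinarith
  have hle : ∀ k : Fin K, 1 + g * s k ≤ 1 + g := fun k => by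
    have := (hs k).2; nlinarith
  have hd2 : 0 ≤ d2 := by
    rw [← hsum]; exact Finset.sum_nonneg fun k _ => (hs k).1
  constructor
  · -- lower bound
    have : (1 / (1 + g)) ^ K = ∏ _k : Fin K, 1 / (1 + g) := by
      simp
    rw [this]
    apply Finset.prod_le_prod (fun k _ => by positivity)
    intro k _
    rw [one_div, one_div]
    exact inv_anti₀ (hpos k) (hle k)
  · -- upper bound: (1+g)^⌊d2⌋ ≤ ∏ (1 + g * s k)
    have key : (1 + g) ^ (⌊d2⌋.toNat) ≤ ∏ k, (1 + g * s k) := by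
      have h1 : ((⌊d2⌋.toNat : ℝ)) ≤ d2 := by
        rcases le_or_gt 0 ⌊d2⌋ with h | h
        · have h2 : ((⌊d2⌋.toNat : ℤ) : ℝ) = ((⌊d2⌋ : ℤ) : ℝ) := by
            rw [Int.toNat_of_nonneg h]
          push_cast at h2
          rw [h2]; exact Int.floor_le d2
        · simp [Int.toNat_of_nonpos h.le, hd2]
      calc (1 + g) ^ (⌊d2⌋.toNat) = (1 + g) ^ ((⌊d2⌋.toNat : ℝ)) := by
              rw [Real.rpow_natCast]
        _ ≤ (1 + g) ^ d2 := Real.rpow_le_rpow_of_exponent_le (by linarith) h1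
        _ = (1 + g) ^ (∑ k, s k) := by rw [hsum]
        _ = ∏ k, (1 + g) ^ (s k) := Real.rpow_sum_of_pos hg1 _ _
        _ ≤ ∏ k, (1 + g * s k) := by
            apply Finset.prod_le_prod (fun k _ => Real.rpow_nonneg hg1.le (s k))
            intro k _
            have h := rpow_one_add_le_one_add_mul_self (s := g) (p := s k)
              (by linarith) (hs k).1 (hs k).2
            nlinarith [h]
    have hprodpos : (0:ℝ) < ∏ k, (1 + g * s k) :=
      Finset.prod_pos fun k _ => hpos k
    calc ∏ k, 1 / (1 + g * s k) = (∏ k, (1 + g * s k))⁻¹ := by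
          simp [Finset.prod_inv_distrib, one_div]
      _ ≤ ((1 + g) ^ (⌊d2⌋.toNat))⁻¹ := by
          apply inv_anti₀ (by positivity) key
      _ = (1 / (1 + g)) ^ (⌊d2⌋.toNat) := by rw [one_div, inv_pow]
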